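/- arXiv:2011.06126 — 5 statements merged into one kernel-verified Lean document; each statement's English description precedes it below -/
import Mathlib

section
/- For two-qubit quantum states, the Tsirelson-type strong monogamy holds: for any tripartite quantum state ρ_ABC and binary ±1-valued observables A₀, A₁ on A, B₀, B₁ on B, C₀, C₁ on C, the CHSH operators satisfy ⟨𝓑_AB⟩² + ⟨𝓑_BC⟩² ≤ 8. -/
open Matrix Kronecker ComplexOrder

private lemma kron_sub' {l m n p : Type*} (A B : Matrix l m ℂ) (C : Matrix n p ℂ) :
    (A - B) ⊗ₖ C = A ⊗ₖ C - B ⊗ₖ C := by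
  ext ⟨i, k⟩ ⟨j, o⟩
  simp [Matrix.kroneckerMap_apply, sub_mul]

private lemma kron_conjT {l m n p : Type*} (A : Matrix l m ℂ) (B : Matrix n p ℂ) :
    (A ⊗ₖ B)ᴴ = Aᴴ ⊗ₖ Bᴴ := by
  ext ⟨i, k⟩ ⟨j, o⟩
  simp [Matrix.conjTranspose_apply, Matrix.kroneckerMap_apply, StarMul.star_mul, mul_comm]

private lemma psd_trace_re_nonneg {n : Type*} [Fintype n] [DecidableEq n] {M : Matrix n n ℂ}
    (hM : M.PosSemidef) : 0 ≤ M.trace.re := by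
  have h : ∀ i, 0 ≤ (M i i).re := by
    intro i
    have h2 := hM.dotProduct_mulVec_nonneg (Pi.single i 1)
    have h3 : star (Pi.single i 1 : n → ℂ) ⬝ᵥ (M *ᵥ Pi.single i 1) = M i i := by
      simp [Matrix.mulVec_single, dotProduct, Pi.single_apply, apply_ite]
    rw [h3] at h2
    exact (Complex.le_def.mp h2).1
  rw [Matrix.trace, Complex.re_sum]
  exact Finset.sum_nonneg fun i _ => h i

private lemma sandwich_nonneg {n : Type*} [Fintype n] [DecidableEq n] {ρ : Matrix n n ℂ}
    (hρ : ρ.PosSemidef) (N : Matrix n n ℂ) : 0 ≤ (Matrix.trace (ρ * (Nᴴ * N))).re := by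
  have h1 : ρ * (Nᴴ * N) = (ρ * Nᴴ) * N := by rw [Matrix.mul_assoc]
  rw [h1, Matrix.trace_mul_comm]
  have h2 : N * (ρ * Nᴴ) = N * ρ * Nᴴ := by rw [Matrix.mul_assoc]
  rw [h2]
  exact psd_trace_re_nonneg (hρ.mul_mul_conjTranspose_same N)

section Identities

variable {nA nB nC : ℕ}
    (A₀ A₁ : Matrix (Fin nA) (Fin nA) ℂ)
    (B₀ B₁ : Matrix (Fin nB) (Fin nB) ℂ)
    (C₀ C₁ : Matrix (Fin nC) (Fin nC) ℂ)

private lemma L1' (hA₀sq : A₀ * A₀ = 1) (hA₁sq : A₁ * A₁ = 1)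
    (hB₀sq : B₀ * B₀ = 1) (hB₁sq : B₁ * B₁ = 1) :
    ((A₀ ⊗ₖ B₀ + A₀ ⊗ₖ B₁ + A₁ ⊗ₖ B₀ - A₁ ⊗ₖ B₁) ⊗ₖ (1 : Matrix (Fin nC) (Fin nC) ℂ)) *
      ((A₀ ⊗ₖ B₀ + A₀ ⊗ₖ B₁ + A₁ ⊗ₖ B₀ - A₁ ⊗ₖ B₁) ⊗ₖ (1 : Matrix (Fin nC) (Fin nC) ℂ)) +
    ((A₀ ⊗ₖ B₀ + A₀ ⊗ₖ B₁ - A₁ ⊗ₖ B₀ + A₁ ⊗ₖ B₁) ⊗ₖ (1 : Matrix (Fin nC) (Fin nC) ℂ)) *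
      ((A₀ ⊗ₖ B₀ + A₀ ⊗ₖ B₁ - A₁ ⊗ₖ B₀ + A₁ ⊗ₖ B₁) ⊗ₖ (1 : Matrix (Fin nC) (Fin nC) ℂ)) =
    (8 : ℂ) • 1 := by
  simp only [Matrix.add_kronecker, kron_sub']
  simp only [mul_add, add_mul, mul_sub, sub_mul]
  simp only [← Matrix.mul_kronecker_mul]
  simp only [hA₀sq, hA₁sq, hB₀sq, hB₁sq, Matrix.one_mul, Matrix.mul_one,
    Matrix.one_kronecker_one]
  module

private lemma L2' (hB₀sq : B₀ * B₀ = 1) (hB₁sq : B₁ * B₁ = 1)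
    (hC₀sq : C₀ * C₀ = 1) (hC₁sq : C₁ * C₁ = 1) :
    (((1 : Matrix (Fin nA) (Fin nA) ℂ) ⊗ₖ B₀) ⊗ₖ C₀ +
        ((1 : Matrix (Fin nA) (Fin nA) ℂ) ⊗ₖ B₀) ⊗ₖ C₁ +
        ((1 : Matrix (Fin nA) (Fin nA) ℂ) ⊗ₖ B₁) ⊗ₖ C₀ -
        ((1 : Matrix (Fin nA) (Fin nA) ℂ) ⊗ₖ B₁) ⊗ₖ C₁) *
      (((1 : Matrix (Fin nA) (Fin nA) ℂ) ⊗ₖ B₀) ⊗ₖ C₀ +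
        ((1 : Matrix (Fin nA) (Fin nA) ℂ) ⊗ₖ B₀) ⊗ₖ C₁ +
        ((1 : Matrix (Fin nA) (Fin nA) ℂ) ⊗ₖ B₁) ⊗ₖ C₀ -
        ((1 : Matrix (Fin nA) (Fin nA) ℂ) ⊗ₖ B₁) ⊗ₖ C₁) +
    (((1 : Matrix (Fin nA) (Fin nA) ℂ) ⊗ₖ B₀) ⊗ₖ C₀ -
        ((1 : Matrix (Fin nA) (Fin nA) ℂ) ⊗ₖ B₀) ⊗ₖ C₁ +
        ((1 : Matrix (Fin nA) (Fin nA) ℂ) ⊗ₖ B₁) ⊗ₖ C₀ +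
        ((1 : Matrix (Fin nA) (Fin nA) ℂ) ⊗ₖ B₁) ⊗ₖ C₁) *
      (((1 : Matrix (Fin nA) (Fin nA) ℂ) ⊗ₖ B₀) ⊗ₖ C₀ -
        ((1 : Matrix (Fin nA) (Fin nA) ℂ) ⊗ₖ B₀) ⊗ₖ C₁ +
        ((1 : Matrix (Fin nA) (Fin nA) ℂ) ⊗ₖ B₁) ⊗ₖ C₀ +
        ((1 : Matrix (Fin nA) (Fin nA) ℂ) ⊗ₖ B₁) ⊗ₖ C₁) =
    (8 : ℂ) • 1 := by
  simp only [mul_add, add_mul, mul_sub, sub_mul]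
  simp only [← Matrix.mul_kronecker_mul]
  simp only [hB₀sq, hB₁sq, hC₀sq, hC₁sq, Matrix.one_mul, Matrix.mul_one,
    Matrix.one_kronecker_one]
  module

private lemma L3' (hA₀sq : A₀ * A₀ = 1) (hA₁sq : A₁ * A₁ = 1)
    (hB₀sq : B₀ * B₀ = 1) (hB₁sq : B₁ * B₁ = 1)
    (hC₀sq : C₀ * C₀ = 1) (hC₁sq : C₁ * C₁ = 1) :
    ((A₀ ⊗ₖ B₀ + A₀ ⊗ₖ B₁ + A₁ ⊗ₖ B₀ - A₁ ⊗ₖ B₁) ⊗ₖ (1 : Matrix (Fin nC) (Fin nC) ℂ)) *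
      (((1 : Matrix (Fin nA) (Fin nA) ℂ) ⊗ₖ B₀) ⊗ₖ C₀ +
        ((1 : Matrix (Fin nA) (Fin nA) ℂ) ⊗ₖ B₀) ⊗ₖ C₁ +
        ((1 : Matrix (Fin nA) (Fin nA) ℂ) ⊗ₖ B₁) ⊗ₖ C₀ -
        ((1 : Matrix (Fin nA) (Fin nA) ℂ) ⊗ₖ B₁) ⊗ₖ C₁) +
    (((1 : Matrix (Fin nA) (Fin nA) ℂ) ⊗ₖ B₀) ⊗ₖ C₀ +
        ((1 : Matrix (Fin nA) (Fin nA) ℂ) ⊗ₖ B₀) ⊗ₖ C₁ +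
        ((1 : Matrix (Fin nA) (Fin nA) ℂ) ⊗ₖ B₁) ⊗ₖ C₀ -
        ((1 : Matrix (Fin nA) (Fin nA) ℂ) ⊗ₖ B₁) ⊗ₖ C₁) *
      ((A₀ ⊗ₖ B₀ + A₀ ⊗ₖ B₁ + A₁ ⊗ₖ B₀ - A₁ ⊗ₖ B₁) ⊗ₖ (1 : Matrix (Fin nC) (Fin nC) ℂ)) =
    ((A₀ ⊗ₖ B₀ + A₀ ⊗ₖ B₁ - A₁ ⊗ₖ B₀ + A₁ ⊗ₖ B₁) ⊗ₖ (1 : Matrix (Fin nC) (Fin nC) ℂ)) *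
      (((1 : Matrix (Fin nA) (Fin nA) ℂ) ⊗ₖ B₀) ⊗ₖ C₀ -
        ((1 : Matrix (Fin nA) (Fin nA) ℂ) ⊗ₖ B₀) ⊗ₖ C₁ +
        ((1 : Matrix (Fin nA) (Fin nA) ℂ) ⊗ₖ B₁) ⊗ₖ C₀ +
        ((1 : Matrix (Fin nA) (Fin nA) ℂ) ⊗ₖ B₁) ⊗ₖ C₁) +
    (((1 : Matrix (Fin nA) (Fin nA) ℂ) ⊗ₖ B₀) ⊗ₖ C₀ -
        ((1 : Matrix (Fin nA) (Fin nA) ℂ) ⊗ₖ B₀) ⊗ₖ C₁ +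
        ((1 : Matrix (Fin nA) (Fin nA) ℂ) ⊗ₖ B₁) ⊗ₖ C₀ +
        ((1 : Matrix (Fin nA) (Fin nA) ℂ) ⊗ₖ B₁) ⊗ₖ C₁) *
      ((A₀ ⊗ₖ B₀ + A₀ ⊗ₖ B₁ - A₁ ⊗ₖ B₀ + A₁ ⊗ₖ B₁) ⊗ₖ (1 : Matrix (Fin nC) (Fin nC) ℂ)) := by
  simp only [Matrix.add_kronecker, kron_sub']
  simp only [mul_add, add_mul, mul_sub, sub_mul]
  simp only [← Matrix.mul_kronecker_mul]
  simp only [hA₀sq, hA₁sq, hB₀sq, hB₁sq, hC₀sq, hC₁sq, Matrix.one_mul, Matrix.mul_one,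
    Matrix.one_kronecker_one]
  module

end Identities

set_option maxHeartbeats 1600000 in
theorem strong_monogamy_quantum {nA nB nC : ℕ}
    (ρ : Matrix ((Fin nA × Fin nB) × Fin nC) ((Fin nA × Fin nB) × Fin nC) ℂ)
    (hρ : ρ.PosSemidef) (hρtr : ρ.trace = 1)
    (A₀ A₁ : Matrix (Fin nA) (Fin nA) ℂ)
    (B₀ B₁ : Matrix (Fin nB) (Fin nB) ℂ)
    (C₀ C₁ : Matrix (Fin nC) (Fin nC) ℂ)
    (hA₀ : A₀.IsHermitian) (hA₁ : A₁.IsHermitian)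
    (hB₀ : B₀.IsHermitian) (hB₁ : B₁.IsHermitian)
    (hC₀ : C₀.IsHermitian) (hC₁ : C₁.IsHermitian)
    (hA₀sq : A₀ * A₀ = 1) (hA₁sq : A₁ * A₁ = 1)
    (hB₀sq : B₀ * B₀ = 1) (hB₁sq : B₁ * B₁ = 1)
    (hC₀sq : C₀ * C₀ = 1) (hC₁sq : C₁ * C₁ = 1) :
    ((ρ * ((A₀ ⊗ₖ B₀ + A₀ ⊗ₖ B₁ + A₁ ⊗ₖ B₀ - A₁ ⊗ₖ B₁) ⊗ₖ
        (1 : Matrix (Fin nC) (Fin nC) ℂ))).trace.re) ^ 2 +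
    ((ρ * (((1 : Matrix (Fin nA) (Fin nA) ℂ) ⊗ₖ B₀) ⊗ₖ C₀ +
        ((1 : Matrix (Fin nA) (Fin nA) ℂ) ⊗ₖ B₀) ⊗ₖ C₁ +
        ((1 : Matrix (Fin nA) (Fin nA) ℂ) ⊗ₖ B₁) ⊗ₖ C₀ -
        ((1 : Matrix (Fin nA) (Fin nA) ℂ) ⊗ₖ B₁) ⊗ₖ C₁)).trace.re) ^ 2 ≤ 8 := by
  set F : Matrix ((Fin nA × Fin nB) × Fin nC) ((Fin nA × Fin nB) × Fin nC) ℂ :=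
    (A₀ ⊗ₖ B₀ + A₀ ⊗ₖ B₁ + A₁ ⊗ₖ B₀ - A₁ ⊗ₖ B₁) ⊗ₖ (1 : Matrix (Fin nC) (Fin nC) ℂ)
    with hFdef
  set G : Matrix ((Fin nA × Fin nB) × Fin nC) ((Fin nA × Fin nB) × Fin nC) ℂ :=
    ((1 : Matrix (Fin nA) (Fin nA) ℂ) ⊗ₖ B₀) ⊗ₖ C₀ +
      ((1 : Matrix (Fin nA) (Fin nA) ℂ) ⊗ₖ B₀) ⊗ₖ C₁ +
      ((1 : Matrix (Fin nA) (Fin nA) ℂ) ⊗ₖ B₁) ⊗ₖ C₀ -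
      ((1 : Matrix (Fin nA) (Fin nA) ℂ) ⊗ₖ B₁) ⊗ₖ C₁ with hGdef
  set F' : Matrix ((Fin nA × Fin nB) × Fin nC) ((Fin nA × Fin nB) × Fin nC) ℂ :=
    (A₀ ⊗ₖ B₀ + A₀ ⊗ₖ B₁ - A₁ ⊗ₖ B₀ + A₁ ⊗ₖ B₁) ⊗ₖ (1 : Matrix (Fin nC) (Fin nC) ℂ)
    with hF'def
  set G' : Matrix ((Fin nA × Fin nB) × Fin nC) ((Fin nA × Fin nB) × Fin nC) ℂ :=
    ((1 : Matrix (Fin nA) (Fin nA) ℂ) ⊗ₖ B₀) ⊗ₖ C₀ -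
      ((1 : Matrix (Fin nA) (Fin nA) ℂ) ⊗ₖ B₀) ⊗ₖ C₁ +
      ((1 : Matrix (Fin nA) (Fin nA) ℂ) ⊗ₖ B₁) ⊗ₖ C₀ +
      ((1 : Matrix (Fin nA) (Fin nA) ℂ) ⊗ₖ B₁) ⊗ₖ C₁ with hG'def
  have l1 := L1' A₀ A₁ B₀ B₁ (nC := nC) hA₀sq hA₁sq hB₀sq hB₁sq
  have l2 := L2' B₀ B₁ C₀ C₁ (nA := nA) hB₀sq hB₁sq hC₀sq hC₁sq
  have l3 := L3' A₀ A₁ B₀ B₁ C₀ C₁ hA₀sq hA₁sq hB₀sq hB₁sq hC₀sq hC₁sq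
  rw [← hFdef, ← hF'def] at l1 l3
  rw [← hGdef, ← hG'def] at l2 l3
  -- hermiticity
  have hermF : Fᴴ = F := by
    simp [hFdef, kron_conjT, Matrix.conjTranspose_add, Matrix.conjTranspose_sub,
      Matrix.conjTranspose_one, hA₀.eq, hA₁.eq, hB₀.eq, hB₁.eq]
  have hermG : Gᴴ = G := by
    simp [hGdef, kron_conjT, Matrix.conjTranspose_add, Matrix.conjTranspose_sub,
      Matrix.conjTranspose_one, hB₀.eq, hB₁.eq, hC₀.eq, hC₁.eq]
  have hermF' : F'ᴴ = F' := by
    simp [hF'def, kron_conjT, Matrix.conjTranspose_add, Matrix.conjTranspose_sub,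
      Matrix.conjTranspose_one, hA₀.eq, hA₁.eq, hB₀.eq, hB₁.eq]
  have hermG' : G'ᴴ = G' := by
    simp [hG'def, kron_conjT, Matrix.conjTranspose_add, Matrix.conjTranspose_sub,
      Matrix.conjTranspose_one, hB₀.eq, hB₁.eq, hC₀.eq, hC₁.eq]
  set a : ℝ := (ρ * F).trace.re with ha
  set b : ℝ := (ρ * G).trace.re with hb
  set r2 : ℝ := a ^ 2 + b ^ 2 with hr2
  show a ^ 2 + b ^ 2 ≤ 8
  set H : Matrix ((Fin nA × Fin nB) × Fin nC) ((Fin nA × Fin nB) × Fin nC) ℂ :=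
    (a : ℂ) • F + (b : ℂ) • G with hH
  set H' : Matrix ((Fin nA × Fin nB) × Fin nC) ((Fin nA × Fin nB) × Fin nC) ℂ :=
    (a : ℂ) • F' - (b : ℂ) • G' with hH'
  -- master identity
  have master : H * H + H' * H' = ((8 * r2 : ℝ) : ℂ) • 1 := by
    have e1 : H * H + H' * H' =
        ((a : ℂ) * (a : ℂ)) • (F * F + F' * F') + ((b : ℂ) * (b : ℂ)) • (G * G + G' * G')
          + ((a : ℂ) * (b : ℂ)) • ((F * G + G * F) - (F' * G' + G' * F')) := by
      rw [hH, hH']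
      simp only [add_mul, mul_add, sub_mul, mul_sub, smul_mul_assoc, mul_smul_comm]
      module
    rw [e1, l1, l2, l3, sub_self, smul_zero, add_zero, smul_smul, smul_smul, ← add_smul]
    congr 1
    rw [hr2]
    push_cast
    ring
  -- hermiticity of H, H'
  have hermH : Hᴴ = H := by
    rw [hH]
    simp [Matrix.conjTranspose_add, Matrix.conjTranspose_smul, hermF, hermG,
      Complex.star_def, Complex.conj_ofReal]
  have hermH' : H'ᴴ = H' := by
    rw [hH']
    simp [Matrix.conjTranspose_sub, Matrix.conjTranspose_smul, hermF', hermG',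
      Complex.star_def, Complex.conj_ofReal]
  -- trace of ρ * H
  have htrH : (ρ * H).trace.re = r2 := by
    have e : (ρ * H).trace = (a : ℂ) * (ρ * F).trace + (b : ℂ) * (ρ * G).trace := by
      rw [hH, Matrix.mul_add, Matrix.mul_smul, Matrix.mul_smul, Matrix.trace_add,
        Matrix.trace_smul, Matrix.trace_smul, smul_eq_mul, smul_eq_mul]
    rw [e]
    simp only [Complex.add_re, Complex.re_ofReal_mul]
    rw [← ha, ← hb, hr2]
    ring
  -- nonnegativity of the primed term
  have hw : 0 ≤ (ρ * (H' * H')).trace.re := by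
    have := sandwich_nonneg hρ H'
    rwa [hermH'] at this
  -- trace of ρ * (H * H)
  have htrHH : (ρ * (H * H)).trace.re = 8 * r2 - (ρ * (H' * H')).trace.re := by
    have e : H * H = ((8 * r2 : ℝ) : ℂ) • 1 - H' * H' := by
      rw [← master]; abel
    rw [e, Matrix.mul_sub, Matrix.mul_smul, Matrix.mul_one, Matrix.trace_sub,
      Matrix.trace_smul, smul_eq_mul, Complex.sub_re, Complex.re_ofReal_mul, hρtr]
    simp
  -- variance argument
  have hvar : 0 ≤ (ρ * ((H - ((r2 : ℝ) : ℂ) • 1)ᴴ * (H - ((r2 : ℝ) : ℂ) • 1))).trace.re := by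
    exact sandwich_nonneg hρ _
  have hexp : (H - ((r2 : ℝ) : ℂ) • 1)ᴴ * (H - ((r2 : ℝ) : ℂ) • 1) =
      H * H - ((r2 : ℝ) : ℂ) • H - ((r2 : ℝ) : ℂ) • H + (((r2 : ℝ) : ℂ) * ((r2 : ℝ) : ℂ)) • 1 := by
    rw [Matrix.conjTranspose_sub, Matrix.conjTranspose_smul, Matrix.conjTranspose_one,
      hermH, Complex.star_def, Complex.conj_ofReal]
    simp only [sub_mul, mul_sub, smul_mul_assoc, mul_smul_comm, Matrix.mul_one,
      Matrix.one_mul]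
    module
  rw [hexp] at hvar
  have etr : (ρ * (H * H - ((r2 : ℝ) : ℂ) • H - ((r2 : ℝ) : ℂ) • H
      + (((r2 : ℝ) : ℂ) * ((r2 : ℝ) : ℂ)) • 1)).trace.re
      = (ρ * (H * H)).trace.re - r2 * (ρ * H).trace.re - r2 * (ρ * H).trace.re
        + r2 * r2 := by
    simp only [Matrix.mul_add, Matrix.mul_sub, Matrix.mul_smul, Matrix.mul_one,
      Matrix.trace_add, Matrix.trace_sub, Matrix.trace_smul, smul_eq_mul]
    have : (((r2 : ℝ) : ℂ) * ((r2 : ℝ) : ℂ)) = ((r2 * r2 : ℝ) : ℂ) := by push_cast; ring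
    rw [this]
    simp only [Complex.add_re, Complex.sub_re, Complex.re_ofReal_mul, Complex.mul_re]
    rw [hρtr]
    simp
  rw [etr, htrH, htrHH] at hvar
  -- conclude
  have hr2nn : 0 ≤ r2 := by rw [hr2]; positivity
  nlinarith [hvar, hw, hr2nn]
end

section
/- Tsirelson's bound: for any quantum state ρ on H_A ⊗ H_B and ±1-valued observables A₀, A₁ on H_A and B₀, B₁ on H_B, the CHSH expectation satisfies |Tr(ρ (A₀⊗B₀ + A₀⊗B₁ + A₁⊗B₀ − A₁⊗B₁))| ≤ 2√2. -/
open Matrix Kronecker ComplexOrder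

lemma kron_conjTranspose {m n p q : Type*} (A : Matrix m n ℂ) (B : Matrix p q ℂ) :
    (A ⊗ₖ B)ᴴ = Aᴴ ⊗ₖ Bᴴ := by
  ext ⟨i, j⟩ ⟨k, l⟩
  simp [Matrix.conjTranspose_apply, Matrix.kroneckerMap_apply]

theorem tsirelson_bound {nA nB : ℕ}
    (ρ : Matrix (Fin nA × Fin nB) (Fin nA × Fin nB) ℂ)
    (hρ : ρ.PosSemidef) (hρtr : ρ.trace = 1)
    (A₀ A₁ : Matrix (Fin nA) (Fin nA) ℂ) (B₀ B₁ : Matrix (Fin nB) (Fin nB) ℂ)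
    (hA₀ : A₀.IsHermitian) (hA₁ : A₁.IsHermitian)
    (hB₀ : B₀.IsHermitian) (hB₁ : B₁.IsHermitian)
    (hA₀sq : A₀ * A₀ = 1) (hA₁sq : A₁ * A₁ = 1)
    (hB₀sq : B₀ * B₀ = 1) (hB₁sq : B₁ * B₁ = 1) :
    ‖(ρ * (A₀ ⊗ₖ B₀ + A₀ ⊗ₖ B₁ + A₁ ⊗ₖ B₀ - A₁ ⊗ₖ B₁)).trace‖
      ≤ 2 * Real.sqrt 2 := by
  classical
  obtain ⟨M, hM⟩ : ∃ M : Matrix (Fin nA × Fin nB) (Fin nA × Fin nB) ℂ, ρ = Mᴴ * M := by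
    open scoped MatrixOrder in
    obtain ⟨X, hX, -, hXX⟩ := CFC.exists_sqrt_of_isSelfAdjoint_of_quasispectrumRestricts
      hρ.isHermitian (QuasispectrumRestricts.nnreal_of_nonneg hρ.nonneg)
    exact ⟨X, by rw [← hXX, ← Matrix.star_eq_conjTranspose, hX.star_eq]⟩
  let ι := Fin nA × Fin nB
  let v : Matrix ι ι ℂ → EuclideanSpace ℂ (ι × ι) := fun X => WithLp.toLp 2 (fun p => (X * Mᴴ) p.2 p.1)
  have hv : ∀ X Y : Matrix ι ι ℂ,
      (inner ℂ (v X) (v Y) : ℂ) = (ρ * (Xᴴ * Y)).trace := by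
    intro X Y
    have h1 : (inner ℂ (v X) (v Y) : ℂ)
        = ∑ p : ι × ι, (starRingEnd ℂ) ((X * Mᴴ) p.2 p.1) * (Y * Mᴴ) p.2 p.1 := by
      simp [v, PiLp.inner_apply, RCLike.inner_apply]
      exact Finset.sum_congr rfl fun _ _ => mul_comm _ _
    have h2 : ∀ p : ι × ι, (starRingEnd ℂ) ((X * Mᴴ) p.2 p.1) = (M * Xᴴ) p.1 p.2 := by
      intro p
      have : (M * Xᴴ) = (X * Mᴴ)ᴴ := by simp [Matrix.conjTranspose_mul]
      rw [this, Matrix.conjTranspose_apply]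
      rfl
    rw [h1]
    simp only [h2]
    have h3 : (∑ p : ι × ι, (M * Xᴴ) p.1 p.2 * (Y * Mᴴ) p.2 p.1)
        = (M * Xᴴ * (Y * Mᴴ)).trace := by
      rw [Fintype.sum_prod_type]
      simp [Matrix.trace, Matrix.diag, Matrix.mul_apply]
      rfl
    rw [h3, hM]
    rw [show M * Xᴴ * (Y * Mᴴ) = (M * (Xᴴ * Y)) * Mᴴ by
      simp only [Matrix.mul_assoc]]
    rw [Matrix.trace_mul_comm, ← Matrix.mul_assoc, ← Matrix.mul_assoc]
  -- the four vectors
  set a₀ : EuclideanSpace ℂ (ι × ι) := v (A₀ ⊗ₖ (1 : Matrix (Fin nB) (Fin nB) ℂ)) with ha₀def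
  set a₁ : EuclideanSpace ℂ (ι × ι) := v (A₁ ⊗ₖ (1 : Matrix (Fin nB) (Fin nB) ℂ)) with ha₁def
  set b₀ : EuclideanSpace ℂ (ι × ι) := v ((1 : Matrix (Fin nA) (Fin nA) ℂ) ⊗ₖ B₀) with hb₀def
  set b₁ : EuclideanSpace ℂ (ι × ι) := v ((1 : Matrix (Fin nA) (Fin nA) ℂ) ⊗ₖ B₁) with hb₁def
  have norm_one : ∀ (X : Matrix ι ι ℂ), Xᴴ * X = 1 → ‖v X‖ = 1 := by
    intro X hX
    have h := hv X X
    rw [hX, Matrix.mul_one, hρtr, inner_self_eq_norm_sq_to_K] at h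
    have h2 : ‖v X‖ ^ 2 = (1 : ℝ) := by
      have : ((‖v X‖ ^ 2 : ℝ) : ℂ) = ((1 : ℝ) : ℂ) := by push_cast; exact h
      exact_mod_cast this
    nlinarith [norm_nonneg (v X)]
  have hna₀ : ‖a₀‖ = 1 := by
    apply norm_one
    rw [kron_conjTranspose, Matrix.conjTranspose_one, hA₀, ← Matrix.mul_kronecker_mul,
      hA₀sq, Matrix.one_mul, Matrix.one_kronecker_one]
  have hna₁ : ‖a₁‖ = 1 := by
    apply norm_one
    rw [kron_conjTranspose, Matrix.conjTranspose_one, hA₁, ← Matrix.mul_kronecker_mul,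
      hA₁sq, Matrix.one_mul, Matrix.one_kronecker_one]
  have hnb₀ : ‖b₀‖ = 1 := by
    apply norm_one
    rw [kron_conjTranspose, Matrix.conjTranspose_one, hB₀, ← Matrix.mul_kronecker_mul,
      hB₀sq, Matrix.one_mul, Matrix.one_kronecker_one]
  have hnb₁ : ‖b₁‖ = 1 := by
    apply norm_one
    rw [kron_conjTranspose, Matrix.conjTranspose_one, hB₁, ← Matrix.mul_kronecker_mul,
      hB₁sq, Matrix.one_mul, Matrix.one_kronecker_one]
  have hinner : ∀ (A : Matrix (Fin nA) (Fin nA) ℂ) (B : Matrix (Fin nB) (Fin nB) ℂ),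
      A.IsHermitian →
      (inner ℂ (v (A ⊗ₖ (1 : Matrix (Fin nB) (Fin nB) ℂ)))
        (v ((1 : Matrix (Fin nA) (Fin nA) ℂ) ⊗ₖ B)) : ℂ) = (ρ * (A ⊗ₖ B)).trace := by
    intro A B hA
    rw [hv]
    congr 2
    rw [kron_conjTranspose, Matrix.conjTranspose_one, hA, ← Matrix.mul_kronecker_mul,
      Matrix.mul_one, Matrix.one_mul]
  -- decompose the trace
  have key : (ρ * (A₀ ⊗ₖ B₀ + A₀ ⊗ₖ B₁ + A₁ ⊗ₖ B₀ - A₁ ⊗ₖ B₁)).trace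
      = inner ℂ a₀ (b₀ + b₁) + inner ℂ a₁ (b₀ - b₁) := by
    rw [inner_add_right, inner_sub_right, ha₀def, ha₁def, hb₀def, hb₁def,
      hinner A₀ B₀ hA₀, hinner A₀ B₁ hA₀, hinner A₁ B₀ hA₁, hinner A₁ B₁ hA₁]
    simp only [Matrix.mul_add, Matrix.mul_sub, Matrix.trace_add, Matrix.trace_sub]
    ring
  rw [key]
  have cs₀ : ‖(inner ℂ a₀ (b₀ + b₁) : ℂ)‖ ≤ ‖b₀ + b₁‖ := by
    calc ‖(inner ℂ a₀ (b₀ + b₁) : ℂ)‖ = ‖(inner ℂ a₀ (b₀ + b₁) : ℂ)‖ := rfl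
      _ ≤ ‖a₀‖ * ‖b₀ + b₁‖ := norm_inner_le_norm _ _
      _ = ‖b₀ + b₁‖ := by rw [hna₀, one_mul]
  have cs₁ : ‖(inner ℂ a₁ (b₀ - b₁) : ℂ)‖ ≤ ‖b₀ - b₁‖ := by
    calc ‖(inner ℂ a₁ (b₀ - b₁) : ℂ)‖ = ‖(inner ℂ a₁ (b₀ - b₁) : ℂ)‖ := rfl
      _ ≤ ‖a₁‖ * ‖b₀ - b₁‖ := norm_inner_le_norm _ _
      _ = ‖b₀ - b₁‖ := by rw [hna₁, one_mul]
  have par := parallelogram_law_with_norm ℂ b₀ b₁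
  rw [hnb₀, hnb₁] at par
  have habs : ‖(inner ℂ a₀ (b₀ + b₁) + inner ℂ a₁ (b₀ - b₁) : ℂ)‖
      ≤ ‖b₀ + b₁‖ + ‖b₀ - b₁‖ :=
    le_trans (norm_add_le _ _) (add_le_add cs₀ cs₁)
  refine le_trans habs ?_
  have h1 : (0:ℝ) ≤ ‖b₀ + b₁‖ := norm_nonneg _
  have h2 : (0:ℝ) ≤ ‖b₀ - b₁‖ := norm_nonneg _
  nlinarith [Real.sq_sqrt (by norm_num : (0:ℝ) ≤ 2), Real.sqrt_nonneg 2,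
    sq_nonneg (‖b₀ + b₁‖ - ‖b₀ - b₁‖), sq_nonneg (‖b₀ + b₁‖ + ‖b₀ - b₁‖ - 2 * Real.sqrt 2)]
end

section
/- For a qubit state ρ and two orthogonal projective measurements X and Z (Pauli observables), the outcome probabilities satisfy p(X = +1)_ρ + p(Z = +1)_ρ ≤ 1 + 1/√2, with equality attained for an eigenstate of (X + Z)/√2. -/
open Matrix ComplexOrder

set_option maxHeartbeats 1000000

/-- Pauli X. -/
noncomputable def pauliX : Matrix (Fin 2) (Fin 2) ℂ := !![0, 1; 1, 0]

/-- Pauli Z. -/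
noncomputable def pauliZ : Matrix (Fin 2) (Fin 2) ℂ := !![1, 0; 0, -1]

/-- Projector onto the +1 eigenspace of a ±1 observable M, namely (I + M)/2. -/
noncomputable def projPlus (M : Matrix (Fin 2) (Fin 2) ℂ) : Matrix (Fin 2) (Fin 2) ℂ :=
  (1 / 2 : ℂ) • (1 + M)

theorem qubit_fine_grained_uncertainty
    (ρ : Matrix (Fin 2) (Fin 2) ℂ) (hρ : ρ.PosSemidef) (hρtr : ρ.trace = 1) :
    (ρ * projPlus pauliX).trace.re + (ρ * projPlus pauliZ).trace.re
        ≤ 1 + 1 / Real.sqrt 2 ∧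
      ∃ σ : Matrix (Fin 2) (Fin 2) ℂ, σ.PosSemidef ∧ σ.trace = 1 ∧
        ((Real.sqrt 2)⁻¹ : ℂ) • (pauliX + pauliZ) * σ = σ ∧
        (σ * projPlus pauliX).trace.re + (σ * projPlus pauliZ).trace.re
          = 1 + 1 / Real.sqrt 2 := by
  constructor
  · -- the uncertainty inequality
    have h1 : ρ 1 0 = star (ρ 0 1) := (hρ.1.apply 1 0).symm
    have h00 := hρ.1.apply 0 0
    have h11 := hρ.1.apply 1 1
    have h00' : (ρ 0 0).im = 0 := by
      have := congrArg Complex.im h00; simp at this; linarith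
    have h11' : (ρ 1 1).im = 0 := by
      have := congrArg Complex.im h11; simp at this; linarith
    have htr : ρ 0 0 + ρ 1 1 = 1 := by simpa [Matrix.trace, Fin.sum_univ_two] using hρtr
    have htr_re : (ρ 0 0).re + (ρ 1 1).re = 1 := by
      have := congrArg Complex.re htr; simpa using this
    have key : (ρ 0 1).re^2 + (ρ 0 1).im^2 ≤ (ρ 0 0).re * (ρ 1 1).re := by
      have h3 := hρ.dotProduct_mulVec_nonneg ![ρ 0 1, -(ρ 0 0)]
      have h4 := hρ.dotProduct_mulVec_nonneg ![ρ 1 1, -(ρ 1 0)]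
      rw [Complex.le_def] at h3 h4
      have h3' := h3.1
      have h4' := h4.1
      simp [Matrix.mulVec, dotProduct, Fin.sum_univ_two, h1, Complex.mul_re,
        Complex.add_re, Complex.neg_re, Complex.mul_im, Complex.add_im, Complex.neg_im,
        h00', h11'] at h3' h4'
      nlinarith [h3', h4', htr_re]
    have hx : (ρ * projPlus pauliX).trace = 1/2*(ρ 0 0) + 1/2*(ρ 1 1) + (ρ 0 1 + ρ 1 0)/2 := by
      simp [Matrix.trace, Matrix.mul_apply, Fin.sum_univ_two, projPlus, pauliX, Matrix.one_apply]
      ring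
    have hz : (ρ * projPlus pauliZ).trace = 1/2*(ρ 0 0) + 1/2*(ρ 1 1) + (ρ 0 0 - ρ 1 1)/2 := by
      simp [Matrix.trace, Matrix.mul_apply, Fin.sum_univ_two, projPlus, pauliZ, Matrix.one_apply]
      ring
    rw [hx, hz]
    set a := (ρ 0 0).re; set d := (ρ 1 1).re; set p := (ρ 0 1).re; set q := (ρ 0 1).im
    have hgoal : (1/2*(ρ 0 0) + 1/2*(ρ 1 1) + (ρ 0 1 + ρ 1 0)/2).re
        + (1/2*(ρ 0 0) + 1/2*(ρ 1 1) + (ρ 0 0 - ρ 1 1)/2).re = 1 + p + (a - d)/2 := by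
      simp [h1, Complex.add_re, Complex.mul_re, Complex.sub_re, Complex.div_re, h00', h11']
      ring_nf
      nlinarith [htr_re]
    rw [hgoal]
    have hs0 : (0:ℝ) < Real.sqrt 2 := by positivity
    have hs2 : Real.sqrt 2 ^ 2 = 2 := Real.sq_sqrt (by norm_num)
    have hxle : 2*p + (a - d) ≤ Real.sqrt 2 := by
      calc 2*p + (a-d) ≤ |2*p + (a-d)| := le_abs_self _
        _ = Real.sqrt ((2*p + (a-d))^2) := (Real.sqrt_sq_eq_abs _).symm
        _ ≤ Real.sqrt 2 := Real.sqrt_le_sqrt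
            (by nlinarith [key, sq_nonneg (2*p - (a-d)), sq_nonneg q, htr_re])
    have h2s : 1 / Real.sqrt 2 = Real.sqrt 2 / 2 := by
      rw [div_eq_div_iff hs0.ne' (by norm_num : (2:ℝ) ≠ 0)]; nlinarith
    rw [h2s]; linarith
  · -- the extremal state
    have hs0 : (0:ℝ) < Real.sqrt 2 := by positivity
    have hs2 : Real.sqrt 2 * Real.sqrt 2 = 2 := Real.mul_self_sqrt (by norm_num)
    have hc0 : ((Real.sqrt 2 : ℝ) : ℂ) ≠ 0 := by exact_mod_cast hs0.ne'
    have hc2 : ((Real.sqrt 2 : ℝ) : ℂ) * ((Real.sqrt 2 : ℝ) : ℂ) = 2 := by exact_mod_cast hs2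
    have hconj : (starRingEnd ℂ) ((Real.sqrt 2 : ℝ) : ℂ) = ((Real.sqrt 2 : ℝ) : ℂ) :=
      Complex.conj_ofReal _
    set c : ℂ := ((Real.sqrt 2 : ℝ) : ℂ) with hcdef
    clear_value c
    refine ⟨!![1/2 + c/4, c/4; c/4, 1/2 - c/4], ?_, ?_, ?_, ?_⟩
    · have hσ : (!![1/2 + c/4, c/4; c/4, 1/2 - c/4] : Matrix (Fin 2) (Fin 2) ℂ)ᴴ *
          !![1/2 + c/4, c/4; c/4, 1/2 - c/4] = !![1/2 + c/4, c/4; c/4, 1/2 - c/4] := by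
        ext i j
        fin_cases i <;> fin_cases j <;>
          simp [Matrix.mul_apply, Fin.sum_univ_two, Matrix.conjTranspose_apply, hconj, map_add,
            map_sub, map_div₀, map_ofNat]
        · linear_combination (1/8:ℂ)*hc2
        · ring
        · ring
        · linear_combination (1/8:ℂ)*hc2
      exact hσ ▸ Matrix.posSemidef_conjTranspose_mul_self _
    · simp [Matrix.trace, Fin.sum_univ_two]
      ring
    · have hcinv : c⁻¹ = c/2 := by
        field_simp
        linear_combination (-1 : ℂ) * hc2
      rw [hcinv]
      ext i j
      fin_cases i <;> fin_cases j <;>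
        simp [pauliX, pauliZ, Matrix.mul_apply, Fin.sum_univ_two, Matrix.smul_apply]
      · linear_combination (1/4:ℂ)*hc2
      · ring
      · ring
      · linear_combination (1/4:ℂ)*hc2
    · have h14 : (1:ℂ)/2 + c/4 = (((1:ℝ)/2 + Real.sqrt 2/4 : ℝ) : ℂ) := by
        rw [hcdef]; push_cast; ring
      have e1 : ((!![1/2 + c/4, c/4; c/4, 1/2 - c/4] : Matrix (Fin 2) (Fin 2) ℂ) *
          projPlus pauliX).trace = (1:ℂ)/2 + c/4 := by
        simp [Matrix.trace, Matrix.mul_apply, Fin.sum_univ_two, projPlus, pauliX, Matrix.one_apply,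
          Matrix.vecMul, dotProduct, Matrix.smul_apply, Matrix.add_apply, smul_eq_mul]
        ring
      have e2 : ((!![1/2 + c/4, c/4; c/4, 1/2 - c/4] : Matrix (Fin 2) (Fin 2) ℂ) *
          projPlus pauliZ).trace = (1:ℂ)/2 + c/4 := by
        simp [Matrix.trace, Matrix.mul_apply, Fin.sum_univ_two, projPlus, pauliZ, Matrix.one_apply,
          Matrix.vecMul, dotProduct, Matrix.smul_apply, Matrix.add_apply, smul_eq_mul]
        ring
      rw [e1, e2, h14, Complex.ofReal_re]
      field_simp
      nlinarith [hs2]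
end

section
/- No-broadcasting for noncommuting pure states: there is no CPTP map B : M_2(ℂ) → M_2(ℂ) ⊗ M_2(ℂ) such that for both ρ₀ = |0⟩⟨0| and ρ₊ = |+⟩⟨+| one has Tr₂(B(ρ)) = ρ and Tr₁(B(ρ)) = ρ. -/
open Matrix

/-- Partial trace over the second factor. -/
noncomputable def ptrace2 {m n : ℕ} (X : Matrix (Fin m × Fin n) (Fin m × Fin n) ℂ) :
    Matrix (Fin m) (Fin m) ℂ :=
  Matrix.of fun a c => ∑ b, X (a, b) (c, b)

/-- Partial trace over the first factor. -/
noncomputable def ptrace1 {m n : ℕ} (X : Matrix (Fin m × Fin n) (Fin m × Fin n) ℂ) :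
    Matrix (Fin n) (Fin n) ℂ :=
  Matrix.of fun b e => ∑ a, X (a, b) (a, e)

lemma pair_conj_sum_zero {k : ℕ} (f g : Fin k → ℂ)
    (h : ∑ m : Fin k, (f m * (starRingEnd ℂ) (f m) + g m * (starRingEnd ℂ) (g m)) = 0) :
    ∀ m, f m = 0 ∧ g m = 0 := by
  have h' : ((∑ m : Fin k, (Complex.normSq (f m) + Complex.normSq (g m)) : ℝ) : ℂ) = 0 := by
    push_cast
    simpa [Complex.mul_conj] using h
  have hr : ∑ m : Fin k, (Complex.normSq (f m) + Complex.normSq (g m)) = 0 := by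
    exact_mod_cast h'
  intro m
  have hnn : ∀ i ∈ Finset.univ (α := Fin k),
      0 ≤ Complex.normSq (f i) + Complex.normSq (g i) := fun i _ =>
    add_nonneg (Complex.normSq_nonneg _) (Complex.normSq_nonneg _)
  have := (Finset.sum_eq_zero_iff_of_nonneg hnn).1 hr m (Finset.mem_univ m)
  constructor
  · have : Complex.normSq (f m) = 0 := le_antisymm (by nlinarith [Complex.normSq_nonneg (g m)]) (Complex.normSq_nonneg _)
    exact Complex.normSq_eq_zero.1 this
  · have : Complex.normSq (g m) = 0 := le_antisymm (by nlinarith [Complex.normSq_nonneg (f m)]) (Complex.normSq_nonneg _)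
    exact Complex.normSq_eq_zero.1 this

lemma cs_contra {k : ℕ} (c d : Fin k → ℂ)
    (hc : ∑ m : Fin k, c m * (starRingEnd ℂ) (c m) = 1)
    (hd : ∑ m : Fin k, d m * (starRingEnd ℂ) (d m) = 1/2)
    (hcd : ∑ m : Fin k, (starRingEnd ℂ) (c m) * d m = 1) : False := by
  have hc' : ∑ m : Fin k, ‖c m‖ ^ 2 = 1 := by
    have : ((∑ m : Fin k, ‖c m‖ ^ 2 : ℝ) : ℂ) = 1 := by
      push_cast
      simpa [Complex.mul_conj, ← Complex.sq_norm] using hc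
    exact_mod_cast this
  have hd' : ∑ m : Fin k, ‖d m‖ ^ 2 = 1/2 := by
    have : ((∑ m : Fin k, ‖d m‖ ^ 2 : ℝ) : ℂ) = 1/2 := by
      push_cast
      simpa [Complex.mul_conj, ← Complex.sq_norm] using hd
    have h2 := this
    field_simp at h2 ⊢
    exact_mod_cast h2
  have h1 : (1:ℝ) ≤ ∑ m : Fin k, ‖c m‖ * ‖d m‖ := by
    have := norm_sum_le Finset.univ (fun m => (starRingEnd ℂ) (c m) * d m)
    rw [hcd] at this
    simpa [_root_.map_mul, Complex.norm_conj] using this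
  have h2 : (∑ m : Fin k, ‖c m‖ * ‖d m‖) ^ 2 ≤
      (∑ m : Fin k, ‖c m‖ ^ 2) * ∑ m : Fin k, ‖d m‖ ^ 2 :=
    Finset.sum_mul_sq_le_sq_mul_sq _ _ _
  rw [hc', hd'] at h2
  nlinarith

/-- There is no CPTP map (given by Kraus operators) that broadcasts both the
noncommuting pure states |0⟩⟨0| and |+⟩⟨+|. -/
theorem no_broadcasting_noncommuting :
    ¬ ∃ (k : ℕ) (K : Fin k → Matrix (Fin 2 × Fin 2) (Fin 2) ℂ),
      (∑ m : Fin k, (K m)ᴴ * K m = 1) ∧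
      ∀ ρ ∈ ({!![1, 0; 0, 0],
          !![1/2, 1/2; 1/2, 1/2]} : Set (Matrix (Fin 2) (Fin 2) ℂ)),
        ptrace2 (∑ m : Fin k, K m * ρ * (K m)ᴴ) = ρ ∧
        ptrace1 (∑ m : Fin k, K m * ρ * (K m)ᴴ) = ρ := by
  rintro ⟨k, K, hsum, hb⟩
  obtain ⟨h02, h01⟩ := hb _ (Set.mem_insert _ _)
  obtain ⟨hp2, hp1⟩ := hb _ (Set.mem_insert_of_mem _ rfl)
  -- entry formulas
  have E0 : ∀ i j : Fin 2 × Fin 2, (∑ m : Fin k, K m * !![(1:ℂ), 0; 0, 0] * (K m)ᴴ) i j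
      = ∑ m : Fin k, K m i 0 * (starRingEnd ℂ) (K m j 0) := by
    intro i j
    simp [Matrix.sum_apply, Matrix.mul_apply, Matrix.conjTranspose_apply, Fin.sum_univ_two]
  set w : Fin k → Fin 2 × Fin 2 → ℂ := fun m i => K m i 0 + K m i 1 with hw
  have Ep : ∀ i j : Fin 2 × Fin 2, (∑ m : Fin k, K m * !![(1:ℂ)/2, 1/2; 1/2, 1/2] * (K m)ᴴ) i j
      = (∑ m : Fin k, w m i * (starRingEnd ℂ) (w m j)) / 2 := by
    intro i j
    rw [Finset.sum_div]
    simp only [Matrix.sum_apply, Matrix.mul_apply, Matrix.conjTranspose_apply, Fin.sum_univ_two]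
    refine Finset.sum_congr rfl fun m _ => ?_
    simp [hw, Matrix.cons_val_zero, Matrix.cons_val_one, map_add]
    ring
  -- scalar equations from ptrace conditions for ρ₀
  have P0t2 : ∀ a e : Fin 2, ∑ m : Fin k, K m (a,0) 0 * (starRingEnd ℂ) (K m (e,0) 0)
      + ∑ m : Fin k, K m (a,1) 0 * (starRingEnd ℂ) (K m (e,1) 0) = !![(1:ℂ), 0; 0, 0] a e := by
    intro a e
    have := congrFun (congrFun h02 a) e
    simpa [ptrace2, Fin.sum_univ_two, E0] using this
  have P0t1 : ∀ b e : Fin 2, ∑ m : Fin k, K m (0,b) 0 * (starRingEnd ℂ) (K m (0,e) 0)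
      + ∑ m : Fin k, K m (1,b) 0 * (starRingEnd ℂ) (K m (1,e) 0) = !![(1:ℂ), 0; 0, 0] b e := by
    intro b e
    have := congrFun (congrFun h01 b) e
    simpa [ptrace1, Fin.sum_univ_two, E0] using this
  -- scalar equations from ptrace conditions for ρ₊
  have hhalf : ∀ a e : Fin 2, (!![(1:ℂ)/2, 1/2; 1/2, 1/2]) a e = 1/2 := by
    intro a e
    fin_cases a <;> fin_cases e <;> rfl

  have Ppt2 : ∀ a e : Fin 2, ∑ m : Fin k, w m (a,0) * (starRingEnd ℂ) (w m (e,0))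
      + ∑ m : Fin k, w m (a,1) * (starRingEnd ℂ) (w m (e,1)) = 1 := by
    intro a e
    have h := congrFun (congrFun hp2 a) e
    rw [hhalf] at h
    simp only [ptrace2, Matrix.of_apply, Fin.sum_univ_two] at h
    rw [Ep, Ep] at h
    linear_combination 2 * h
  have Ppt1 : ∀ b e : Fin 2, ∑ m : Fin k, w m (0,b) * (starRingEnd ℂ) (w m (0,e))
      + ∑ m : Fin k, w m (1,b) * (starRingEnd ℂ) (w m (1,e)) = 1 := by
    intro b e
    have h := congrFun (congrFun hp1 b) e
    rw [hhalf] at h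
    simp only [ptrace1, Matrix.of_apply, Fin.sum_univ_two] at h
    rw [Ep, Ep] at h
    linear_combination 2 * h
  -- column 0 of K m vanishes off (0,0)
  have hA1 := pair_conj_sum_zero (fun m => K m (1,0) 0) (fun m => K m (1,1) 0) (by
    rw [Finset.sum_add_distrib]
    simpa using P0t2 1 1)
  have hA2 := pair_conj_sum_zero (fun m => K m (0,1) 0) (fun m => K m (1,1) 0) (by
    rw [Finset.sum_add_distrib]
    simpa using P0t1 1 1)
  have hK10 : ∀ m, K m (1,0) 0 = 0 := fun m => (hA1 m).1
  have hK11 : ∀ m, K m (1,1) 0 = 0 := fun m => (hA1 m).2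
  have hK01 : ∀ m, K m (0,1) 0 = 0 := fun m => (hA2 m).1
  -- normalization of c
  have hc : ∑ m : Fin k, K m (0,0) 0 * (starRingEnd ℂ) (K m (0,0) 0) = 1 := by
    have h := P0t2 0 0
    have h2 : ∑ m : Fin k, K m (0,1) 0 * (starRingEnd ℂ) (K m (0,1) 0) = 0 :=
      Finset.sum_eq_zero fun m _ => by rw [hK01 m]; simp
    rw [h2] at h
    simpa using h
  -- w is constant
  have hW2 := pair_conj_sum_zero (fun m => w m (0,0) - w m (1,0)) (fun m => w m (0,1) - w m (1,1)) (by
    have key : ∑ m : Fin k, ((w m (0,0) - w m (1,0)) * (starRingEnd ℂ) (w m (0,0) - w m (1,0))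
        + (w m (0,1) - w m (1,1)) * (starRingEnd ℂ) (w m (0,1) - w m (1,1)))
        = (∑ m : Fin k, w m (0,0) * (starRingEnd ℂ) (w m (0,0)) + ∑ m : Fin k, w m (0,1) * (starRingEnd ℂ) (w m (0,1)))
        + (∑ m : Fin k, w m (1,0) * (starRingEnd ℂ) (w m (1,0)) + ∑ m : Fin k, w m (1,1) * (starRingEnd ℂ) (w m (1,1)))
        - (∑ m : Fin k, w m (0,0) * (starRingEnd ℂ) (w m (1,0)) + ∑ m : Fin k, w m (0,1) * (starRingEnd ℂ) (w m (1,1)))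
        - (∑ m : Fin k, w m (1,0) * (starRingEnd ℂ) (w m (0,0)) + ∑ m : Fin k, w m (1,1) * (starRingEnd ℂ) (w m (0,1))) := by
      simp only [← Finset.sum_sub_distrib, ← Finset.sum_add_distrib]
      refine Finset.sum_congr rfl fun m _ => ?_
      simp only [map_sub]
      ring
    rw [key, Ppt2 0 0, Ppt2 1 1, Ppt2 0 1, Ppt2 1 0]
    ring)
  have hW1 := pair_conj_sum_zero (fun m => w m (0,0) - w m (0,1)) (fun m => w m (1,0) - w m (1,1)) (by
    have key : ∑ m : Fin k, ((w m (0,0) - w m (0,1)) * (starRingEnd ℂ) (w m (0,0) - w m (0,1))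
        + (w m (1,0) - w m (1,1)) * (starRingEnd ℂ) (w m (1,0) - w m (1,1)))
        = (∑ m : Fin k, w m (0,0) * (starRingEnd ℂ) (w m (0,0)) + ∑ m : Fin k, w m (1,0) * (starRingEnd ℂ) (w m (1,0)))
        + (∑ m : Fin k, w m (0,1) * (starRingEnd ℂ) (w m (0,1)) + ∑ m : Fin k, w m (1,1) * (starRingEnd ℂ) (w m (1,1)))
        - (∑ m : Fin k, w m (0,0) * (starRingEnd ℂ) (w m (0,1)) + ∑ m : Fin k, w m (1,0) * (starRingEnd ℂ) (w m (1,1)))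
        - (∑ m : Fin k, w m (0,1) * (starRingEnd ℂ) (w m (0,0)) + ∑ m : Fin k, w m (1,1) * (starRingEnd ℂ) (w m (1,0))) := by
      simp only [← Finset.sum_sub_distrib, ← Finset.sum_add_distrib]
      refine Finset.sum_congr rfl fun m _ => ?_
      simp only [map_sub]
      ring
    rw [key, Ppt1 0 0, Ppt1 1 1, Ppt1 0 1, Ppt1 1 0]
    ring)
  have hw10 : ∀ m, w m (1,0) = w m (0,0) := fun m => by
    have := (hW2 m).1; linear_combination -this
  have hw01 : ∀ m, w m (0,1) = w m (0,0) := fun m => by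
    have := (hW1 m).1; linear_combination -this
  -- normalization of d
  have hd : ∑ m : Fin k, w m (0,0) * (starRingEnd ℂ) (w m (0,0)) = 1/2 := by
    have h := Ppt2 0 0
    have h2 : ∑ m : Fin k, w m (0,1) * (starRingEnd ℂ) (w m (0,1))
        = ∑ m : Fin k, w m (0,0) * (starRingEnd ℂ) (w m (0,0)) :=
      Finset.sum_congr rfl fun m _ => by rw [hw01 m]
    rw [h2] at h
    linear_combination h / 2
  -- trace preservation at entry (0,1)
  have htp := congrFun (congrFun hsum 0) 1
  simp only [Matrix.sum_apply, Matrix.mul_apply, Matrix.conjTranspose_apply,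
    Fintype.sum_prod_type, Fin.sum_univ_two, Matrix.one_apply, if_neg (by decide : ¬((0:Fin 2) = 1))] at htp
  have hcd : ∑ m : Fin k, (starRingEnd ℂ) (K m (0,0) 0) * w m (0,0) = 1 := by
    have hsplit : ∑ m : Fin k, (starRingEnd ℂ) (K m (0,0) 0) * w m (0,0)
        = ∑ m : Fin k, ((starRingEnd ℂ) (K m (0,0) 0) * K m (0,0) 1
            + (starRingEnd ℂ) (K m (0,1) 0) * K m (0,1) 1
            + ((starRingEnd ℂ) (K m (1,0) 0) * K m (1,0) 1
            + (starRingEnd ℂ) (K m (1,1) 0) * K m (1,1) 1))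
          + ∑ m : Fin k, K m (0,0) 0 * (starRingEnd ℂ) (K m (0,0) 0) := by
      rw [← Finset.sum_add_distrib]
      refine Finset.sum_congr rfl fun m _ => ?_
      rw [hK01 m, hK10 m, hK11 m]
      simp only [hw, map_zero]
      ring
    rw [hsplit, hc]
    rw [show (∑ m : Fin k, ((starRingEnd ℂ) (K m (0,0) 0) * K m (0,0) 1
            + (starRingEnd ℂ) (K m (0,1) 0) * K m (0,1) 1
            + ((starRingEnd ℂ) (K m (1,0) 0) * K m (1,0) 1
            + (starRingEnd ℂ) (K m (1,1) 0) * K m (1,1) 1))) = 0 from by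
      rw [← htp]; rfl]
    ring
  exact cs_contra (fun m => K m (0,0) 0) (fun m => w m (0,0)) hc hd hcd
end

section
/- Two commuting qubit density matrices can be broadcast: if density matrices ρ₀, ρ₁ on ℂ² commute, then there exists a CPTP map B : M_2(ℂ) → M_2(ℂ) ⊗ M_2(ℂ) with Tr₂(B(ρ_k)) = ρ_k and Tr₁(B(ρ_k)) = ρ_k for k = 0, 1. -/
open Matrix ComplexOrder

/-- Kraus operators: measure in the basis of columns of `U` and prepare two copies. -/
noncomputable def krausOp {n : ℕ} (U : Matrix (Fin n) (Fin n) ℂ) (i : Fin n) :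
    Matrix (Fin n × Fin n) (Fin n) ℂ :=
  Matrix.of fun p c => U p.1 i * U p.2 i * star (U c i)

lemma col_norm {n : ℕ} {U : Matrix (Fin n) (Fin n) ℂ} (hU1 : Uᴴ * U = 1) (i : Fin n) :
    ∑ a, star (U a i) * U a i = 1 := by
  have := congrFun (congrFun hU1 i) i
  simpa [Matrix.mul_apply, Matrix.one_apply, conjTranspose_apply] using this

lemma kraus_sum {n : ℕ} (U : Matrix (Fin n) (Fin n) ℂ) (hU1 : Uᴴ * U = 1)
    (hU2 : U * Uᴴ = 1) : ∑ i, (krausOp U i)ᴴ * krausOp U i = 1 := by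
  ext c d
  have hrow := congrFun (congrFun hU2 c) d
  simp only [Matrix.mul_apply, conjTranspose_apply] at hrow
  rw [Matrix.sum_apply]
  have key : ∀ i : Fin n, ((krausOp U i)ᴴ * krausOp U i) c d = U c i * star (U d i) := by
    intro i
    rw [Matrix.mul_apply]
    rw [Fintype.sum_prod_type]
    have : ∀ a b : Fin n, (krausOp U i)ᴴ c (a,b) * krausOp U i (a,b) d
        = (star (U a i) * U a i) * ((star (U b i) * U b i) * (U c i * star (U d i))) := by
      intro a b
      simp only [krausOp, conjTranspose_apply, of_apply, star_mul', star_star]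
      ring
    simp only [this, ← Finset.mul_sum, ← Finset.sum_mul, col_norm hU1]
    ring
  simp only [key]
  rw [hrow]

lemma conj_diag {n : ℕ} {U ρ : Matrix (Fin n) (Fin n) ℂ} (hU1 : Uᴴ * U = 1)
    (d : Fin n → ℂ) (hd : ρ = U * diagonal d * Uᴴ) : Uᴴ * ρ * U = diagonal d := by
  rw [hd, show Uᴴ * (U * diagonal d * Uᴴ) * U = (Uᴴ * U) * diagonal d * (Uᴴ * U) by
    noncomm_ring, hU1, one_mul, mul_one]

lemma kraus_entry {n : ℕ} {U ρ : Matrix (Fin n) (Fin n) ℂ} (hU1 : Uᴴ * U = 1)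
    (d : Fin n → ℂ) (hd : ρ = U * diagonal d * Uᴴ) (i a b c e : Fin n) :
    (krausOp U i * ρ * (krausOp U i)ᴴ) (a, b) (c, e)
      = U a i * U b i * star (U c i) * star (U e i) * d i := by
  have hdiag : Uᴴ * ρ * U = diagonal d := conj_diag hU1 d hd
  rw [Matrix.mul_apply]
  have h1 : ∀ y, (krausOp U i * ρ) (a, b) y = U a i * U b i * ∑ x, star (U x i) * ρ x y := by
    intro y
    rw [Matrix.mul_apply, Finset.mul_sum]
    refine Finset.sum_congr rfl fun x _ => ?_
    simp only [krausOp, of_apply]; ring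
  have h2 : ∑ y, (∑ x, star (U x i) * ρ x y) * U y i = d i := by
    have hdd : (Uᴴ * ρ * U) i i = d i := by rw [hdiag]; simp
    rw [← hdd, Matrix.mul_apply]
    refine Finset.sum_congr rfl fun y _ => ?_
    rw [Matrix.mul_apply]
    simp [conjTranspose_apply]
  calc ∑ y, (krausOp U i * ρ) (a, b) y * (krausOp U i)ᴴ y (c, e)
      = (U a i * U b i * star (U c i) * star (U e i))
          * ∑ y, (∑ x, star (U x i) * ρ x y) * U y i := by
        rw [Finset.mul_sum]
        refine Finset.sum_congr rfl fun y _ => ?_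
        rw [h1]
        simp only [conjTranspose_apply, krausOp, of_apply, star_mul', star_star]
        ring
    _ = _ := by rw [h2]

lemma ud_entry {n : ℕ} {U ρ : Matrix (Fin n) (Fin n) ℂ}
    (d : Fin n → ℂ) (hd : ρ = U * diagonal d * Uᴴ) (a c : Fin n) :
    ρ a c = ∑ i, U a i * d i * star (U c i) := by
  rw [hd, Matrix.mul_apply]
  refine Finset.sum_congr rfl fun i _ => ?_
  rw [Matrix.mul_diagonal, conjTranspose_apply]

lemma kraus_ptrace2 {n : ℕ} {U ρ : Matrix (Fin n) (Fin n) ℂ} (hU1 : Uᴴ * U = 1)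
    (d : Fin n → ℂ) (hd : ρ = U * diagonal d * Uᴴ) :
    ptrace2 (∑ i, krausOp U i * ρ * (krausOp U i)ᴴ) = ρ := by
  ext a c
  show (∑ b, (∑ i, krausOp U i * ρ * (krausOp U i)ᴴ) (a, b) (c, b)) = ρ a c
  simp only [Matrix.sum_apply, kraus_entry hU1 d hd]
  rw [Finset.sum_comm]
  have key : ∀ i, ∑ b, U a i * U b i * star (U c i) * star (U b i) * d i
      = U a i * d i * star (U c i) := by
    intro i
    have hc := col_norm hU1 i
    calc ∑ b, U a i * U b i * star (U c i) * star (U b i) * d i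
        = (U a i * d i * star (U c i)) * ∑ b, star (U b i) * U b i := by
          rw [Finset.mul_sum]
          refine Finset.sum_congr rfl fun b _ => ?_
          ring
      _ = _ := by rw [hc, mul_one]
  simp only [key]
  exact (ud_entry d hd a c).symm

lemma kraus_ptrace1 {n : ℕ} {U ρ : Matrix (Fin n) (Fin n) ℂ} (hU1 : Uᴴ * U = 1)
    (d : Fin n → ℂ) (hd : ρ = U * diagonal d * Uᴴ) :
    ptrace1 (∑ i, krausOp U i * ρ * (krausOp U i)ᴴ) = ρ := by
  ext b e
  show (∑ a, (∑ i, krausOp U i * ρ * (krausOp U i)ᴴ) (a, b) (a, e)) = ρ b e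
  simp only [Matrix.sum_apply, kraus_entry hU1 d hd]
  rw [Finset.sum_comm]
  have key : ∀ i, ∑ a, U a i * U b i * star (U a i) * star (U e i) * d i
      = U b i * d i * star (U e i) := by
    intro i
    have hc := col_norm hU1 i
    calc ∑ a, U a i * U b i * star (U a i) * star (U e i) * d i
        = (U b i * d i * star (U e i)) * ∑ a, star (U a i) * U a i := by
          rw [Finset.mul_sum]
          refine Finset.sum_congr rfl fun a _ => ?_
          ring
      _ = _ := by rw [hc, mul_one]
  simp only [key]
  exact (ud_entry d hd b e).symm

lemma sandwich_inv {n : ℕ} {U M : Matrix (Fin n) (Fin n) ℂ} (hU2 : U * Uᴴ = 1) :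
    U * (Uᴴ * M * U) * Uᴴ = M := by
  rw [show U * (Uᴴ * M * U) * Uᴴ = (U * Uᴴ) * M * (U * Uᴴ) by noncomm_ring, hU2,
    one_mul, mul_one]

lemma scalar_sandwich {U : Matrix (Fin 2) (Fin 2) ℂ} (hU2 : U * Uᴴ = 1) (c : ℂ) :
    U * diagonal (fun _ : Fin 2 => c) * Uᴴ = c • (1 : Matrix (Fin 2) (Fin 2) ℂ) := by
  have hdc : diagonal (fun _ : Fin 2 => c) = c • (1 : Matrix (Fin 2) (Fin 2) ℂ) := by
    ext i j
    by_cases h : i = j <;> simp [Matrix.diagonal, Matrix.one_apply, h]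
  rw [hdc, mul_smul_comm, smul_mul_assoc, mul_one, hU2]

lemma simdiag (ρ₀ ρ₁ : Matrix (Fin 2) (Fin 2) ℂ)
    (h₀ : ρ₀.IsHermitian) (h₁ : ρ₁.IsHermitian)
    (hcomm : ρ₀ * ρ₁ = ρ₁ * ρ₀) :
    ∃ U : Matrix (Fin 2) (Fin 2) ℂ, Uᴴ * U = 1 ∧ U * Uᴴ = 1 ∧
      (∃ d₀, ρ₀ = U * diagonal d₀ * Uᴴ) ∧ (∃ d₁, ρ₁ = U * diagonal d₁ * Uᴴ) := by
  set U₀ : Matrix (Fin 2) (Fin 2) ℂ := (h₀.eigenvectorUnitary : Matrix (Fin 2) (Fin 2) ℂ)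
  have hU₀1 : U₀ᴴ * U₀ = 1 := by
    rw [← Matrix.star_eq_conjTranspose]
    exact Matrix.mem_unitaryGroup_iff'.mp h₀.eigenvectorUnitary.2
  have hU₀2 : U₀ * U₀ᴴ = 1 := by
    rw [← Matrix.star_eq_conjTranspose]
    exact Matrix.mem_unitaryGroup_iff.mp h₀.eigenvectorUnitary.2
  set U₁ : Matrix (Fin 2) (Fin 2) ℂ := (h₁.eigenvectorUnitary : Matrix (Fin 2) (Fin 2) ℂ)
  have hU₁1 : U₁ᴴ * U₁ = 1 := by
    rw [← Matrix.star_eq_conjTranspose]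
    exact Matrix.mem_unitaryGroup_iff'.mp h₁.eigenvectorUnitary.2
  have hU₁2 : U₁ * U₁ᴴ = 1 := by
    rw [← Matrix.star_eq_conjTranspose]
    exact Matrix.mem_unitaryGroup_iff.mp h₁.eigenvectorUnitary.2
  have hd₀ : ρ₀ = U₀ * diagonal (Complex.ofReal ∘ h₀.eigenvalues) * U₀ᴴ := by
    rw [← Matrix.star_eq_conjTranspose]
    exact h₀.spectral_theorem
  have hd₁ : ρ₁ = U₁ * diagonal (Complex.ofReal ∘ h₁.eigenvalues) * U₁ᴴ := by
    rw [← Matrix.star_eq_conjTranspose]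
    exact h₁.spectral_theorem
  by_cases hdeg : h₀.eigenvalues 0 = h₀.eigenvalues 1
  · -- ρ₀ is a scalar matrix; use the eigenbasis of ρ₁
    refine ⟨U₁, hU₁1, hU₁2, ⟨fun _ => (h₀.eigenvalues 0 : ℂ), ?_⟩,
      ⟨Complex.ofReal ∘ h₁.eigenvalues, hd₁⟩⟩
    have hconst : diagonal (Complex.ofReal ∘ h₀.eigenvalues)
        = diagonal (fun _ : Fin 2 => (h₀.eigenvalues 0 : ℂ)) := by
      ext i j
      fin_cases i <;> fin_cases j <;> simp [hdeg]
    calc ρ₀ = U₀ * diagonal (Complex.ofReal ∘ h₀.eigenvalues) * U₀ᴴ := hd₀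
      _ = U₀ * diagonal (fun _ : Fin 2 => (h₀.eigenvalues 0 : ℂ)) * U₀ᴴ := by rw [hconst]
      _ = (h₀.eigenvalues 0 : ℂ) • (1 : Matrix (Fin 2) (Fin 2) ℂ) := scalar_sandwich hU₀2 _
      _ = U₁ * diagonal (fun _ : Fin 2 => (h₀.eigenvalues 0 : ℂ)) * U₁ᴴ :=
          (scalar_sandwich hU₁2 _).symm
  · -- distinct eigenvalues: anything commuting with ρ₀ is diagonal in its eigenbasis
    refine ⟨U₀, hU₀1, hU₀2, ⟨Complex.ofReal ∘ h₀.eigenvalues, hd₀⟩, ?_⟩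
    set d₀ : Fin 2 → ℂ := Complex.ofReal ∘ h₀.eigenvalues with hd₀def
    set M : Matrix (Fin 2) (Fin 2) ℂ := U₀ᴴ * ρ₁ * U₀ with hM
    have hMcomm : diagonal d₀ * M = M * diagonal d₀ := by
      have hρ₀diag : U₀ᴴ * ρ₀ * U₀ = diagonal d₀ := conj_diag hU₀1 _ hd₀
      calc diagonal d₀ * M = U₀ᴴ * (ρ₀ * ρ₁) * U₀ := by
            rw [← hρ₀diag, hM, show (U₀ᴴ * ρ₀ * U₀) * (U₀ᴴ * ρ₁ * U₀)
              = U₀ᴴ * ρ₀ * (U₀ * U₀ᴴ) * ρ₁ * U₀ by noncomm_ring, hU₀2, mul_one]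
            noncomm_ring
        _ = U₀ᴴ * (ρ₁ * ρ₀) * U₀ := by rw [hcomm]
        _ = M * diagonal d₀ := by
            rw [← hρ₀diag, hM, show (U₀ᴴ * ρ₁ * U₀) * (U₀ᴴ * ρ₀ * U₀)
              = U₀ᴴ * ρ₁ * (U₀ * U₀ᴴ) * ρ₀ * U₀ by noncomm_ring, hU₀2, mul_one]
            noncomm_ring
    have hne : d₀ 0 - d₀ 1 ≠ 0 := by
      simp only [hd₀def, Function.comp_apply, sub_ne_zero]
      exact_mod_cast fun h => hdeg (by exact_mod_cast h)
    have h01 : M 0 1 = 0 := by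
      have := congrFun (congrFun hMcomm 0) 1
      rw [Matrix.diagonal_mul, Matrix.mul_diagonal] at this
      have : M 0 1 * (d₀ 0 - d₀ 1) = 0 := by linear_combination this
      rcases mul_eq_zero.mp this with h | h
      · exact h
      · exact absurd h hne
    have h10 : M 1 0 = 0 := by
      have := congrFun (congrFun hMcomm 1) 0
      rw [Matrix.diagonal_mul, Matrix.mul_diagonal] at this
      have : M 1 0 * (d₀ 0 - d₀ 1) = 0 := by linear_combination -this
      rcases mul_eq_zero.mp this with h | h
      · exact h
      · exact absurd h hne
    refine ⟨fun i => M i i, ?_⟩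
    have hMdiag : M = diagonal (fun i => M i i) := by
      ext i j
      fin_cases i <;> fin_cases j <;> simp [Matrix.diagonal, h01, h10]
    rw [← hMdiag, hM, sandwich_inv hU₀2]

/-- Two commuting qubit density matrices can be broadcast by a CPTP map. -/
theorem broadcasting_commuting_states
    (ρ₀ ρ₁ : Matrix (Fin 2) (Fin 2) ℂ)
    (h₀ : ρ₀.PosSemidef) (h₀tr : ρ₀.trace = 1)
    (h₁ : ρ₁.PosSemidef) (h₁tr : ρ₁.trace = 1)
    (hcomm : ρ₀ * ρ₁ = ρ₁ * ρ₀) :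
    ∃ (k : ℕ) (K : Fin k → Matrix (Fin 2 × Fin 2) (Fin 2) ℂ),
      (∑ m : Fin k, (K m)ᴴ * K m = 1) ∧
      ∀ ρ ∈ ({ρ₀, ρ₁} : Set (Matrix (Fin 2) (Fin 2) ℂ)),
        ptrace2 (∑ m : Fin k, K m * ρ * (K m)ᴴ) = ρ ∧
        ptrace1 (∑ m : Fin k, K m * ρ * (K m)ᴴ) = ρ := by
  obtain ⟨U, hU1, hU2, ⟨d₀, hd₀⟩, ⟨d₁, hd₁⟩⟩ :=
    simdiag ρ₀ ρ₁ h₀.isHermitian h₁.isHermitian hcomm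
  refine ⟨2, krausOp U, kraus_sum U hU1 hU2, ?_⟩
  intro ρ hρ
  simp only [Set.mem_insert_iff, Set.mem_singleton_iff] at hρ
  rcases hρ with rfl | rfl
  · exact ⟨kraus_ptrace2 hU1 d₀ hd₀, kraus_ptrace1 hU1 d₀ hd₀⟩
  · exact ⟨kraus_ptrace2 hU1 d₁ hd₁, kraus_ptrace1 hU1 d₁ hd₁⟩
end
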